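/- arXiv:2504.05442 — 6 statements merged into one kernel-verified Lean document; each statement's English description precedes it below -/
import Mathlib

section
/- For all integers λ ≥ 1 and n ≥ 2 with λ dividing n − 1 and q = (n−1)/λ, deleting any set of at most q − 1 edges from the graph H_{n,λ} leaves a connected graph. -/
namespace BroadcastPaper

/-- Vertex type of the graph `H_{n,λ}` (with `q = (n-1)/λ`): `none` is the hub `h`
and `some (i, a)` is the vertex `(i, a)`. -/
abbrev HubV (lam q : ℕ) : Type := Option (Fin lam × Fin q)

/-- Base relation of `H_{n,λ}`: two non-hub vertices are joined iff they lie in the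
same block, and the hub is joined to every other vertex. -/
def hubRel (lam q : ℕ) : HubV lam q → HubV lam q → Prop
  | none, some _ => True
  | some _, none => True
  | some x, some y => x.1 = y.1
  | none, none => False

/-- The graph `H_{n,λ}`: `λ` disjoint copies of the complete graph `K_q`
together with a hub adjacent to every other vertex. -/
def hubGraph (lam q : ℕ) : SimpleGraph (HubV lam q) :=
  SimpleGraph.fromRel (hubRel lam q)

/-! Each vertex `(i, a)` is joined to the hub by the `q` pairwise edge-disjoint walks
`h – (i, a)` and `h – (i, b) – (i, a)` for `b ≠ a`. Deleting at most `q − 1` edges misses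
one of them, so every vertex stays reachable from the hub. -/

open SimpleGraph

/-- The easy direction of Menger's theorem for edges. -/
theorem _root_.SimpleGraph.reachable_deleteEdges_of_pairwise_disjoint_edges {V ι : Type*}
    {G : SimpleGraph V} {u v : V} (p : ι → G.Walk u v)
    (hp : Pairwise fun i j => (p i).edges.Disjoint (p j).edges)
    {s : Set (Sym2 V)} (hs : s.Finite) (hcard : s.ncard < Nat.card ι) :
    (G.deleteEdges s).Reachable u v := by
  by_contra hunreach
  have hmeets : ∀ i, ∃ e ∈ (p i).edges, e ∈ s := fun i => by
    by_contra! hi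
    exact hunreach ⟨(p i).toDeleteEdges s hi⟩
  choose f hf hfs using hmeets
  have hinj : Function.Injective f := fun i j hij => by
    by_contra hne
    exact hp hne (hf i) (hij ▸ hf j)
  have : Nat.card ι ≤ s.ncard := by
    rw [← Set.ncard_range_of_injective hinj]
    exact Set.ncard_le_ncard (Set.range_subset_iff.2 hfs) hs
  omega

variable {lam q : ℕ}

@[simp]
theorem hubGraph_adj_none_some (x : Fin lam × Fin q) : (hubGraph lam q).Adj none (some x) := by
  simp [hubGraph, hubRel]

@[simp]
theorem hubGraph_adj_some_some {x y : Fin lam × Fin q} :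
    (hubGraph lam q).Adj (some x) (some y) ↔ x ≠ y ∧ x.1 = y.1 := by
  simp [hubGraph, hubRel, eq_comm]

def hubWalkVia (i : Fin lam) (a b : Fin q) : (hubGraph lam q).Walk none (some (i, a)) :=
  if hba : b = a then (hubGraph_adj_none_some (i, a)).toWalk
  else .cons (hubGraph_adj_none_some (i, b))
    (hubGraph_adj_some_some (x := (i, b)) (y := (i, a)) |>.2 ⟨by simpa, rfl⟩).toWalk

theorem pairwise_disjoint_edges_hubWalkVia (i : Fin lam) (a : Fin q) :
    Pairwise fun b c => (hubWalkVia i a b).edges.Disjoint (hubWalkVia i a c).edges := by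
  intro b c hbc
  by_cases hb : b = a <;> by_cases hc : c = a
  · exact absurd (hb.trans hc.symm) hbc
  · subst hb
    simp [hubWalkVia, hc, Ne.symm hc]
  · subst hc
    simp [hubWalkVia, hb, Ne.symm hb]
  · simp [hubWalkVia, hb, hc, Ne.symm hbc]

theorem reachable_hub_deleteEdges_hubGraph {E' : Set (Sym2 (HubV lam q))}
    (hcard : E'.ncard ≤ q - 1) (x : Fin lam × Fin q) :
    ((hubGraph lam q).deleteEdges E').Reachable none (some x) := by
  obtain ⟨i, a⟩ := x
  have hq : 0 < q := a.pos
  refine reachable_deleteEdges_of_pairwise_disjoint_edges (hubWalkVia i a)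
    (pairwise_disjoint_edges_hubWalkVia i a) (Set.toFinite E') ?_
  rw [Nat.card_eq_fintype_card, Fintype.card_fin]
  omega

theorem hub_delete_few_edges_connected_general {lam n : ℕ}
    (E' : Set (Sym2 (HubV lam ((n - 1) / lam))))
    (hcard : E'.ncard ≤ (n - 1) / lam - 1) :
    ((hubGraph lam ((n - 1) / lam)).deleteEdges E').Connected := by
  rw [connected_iff_exists_forall_reachable]
  refine ⟨none, fun w => ?_⟩
  cases w with
  | none => rfl
  | some x => exact reachable_hub_deleteEdges_hubGraph hcard x

/-- for `λ ≥ 1`, `n ≥ 2` with `λ ∣ n − 1` and `q = (n−1)/λ`, deleting any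
set of at most `q − 1` edges from `H_{n,λ}` leaves a connected graph. -/
theorem hub_delete_few_edges_connected {lam n : ℕ} (hlam : 1 ≤ lam) (hn : 2 ≤ n)
    (hdvd : lam ∣ n - 1) (E' : Set (Sym2 (HubV lam ((n - 1) / lam))))
    (hE' : E' ⊆ (hubGraph lam ((n - 1) / lam)).edgeSet)
    (hcard : E'.ncard ≤ (n - 1) / lam - 1) :
    ((hubGraph lam ((n - 1) / lam)).deleteEdges E').Connected :=
  hub_delete_few_edges_connected_general E' hcard

end BroadcastPaper
end

section
/- For all integers λ ≥ 1 and n ≥ 2 with λ dividing n − 1 and q = (n−1)/λ, there exists a set of exactly q edges of the graph H_{n,λ} whose deletion disconnects the graph; together with the fact that deleting at most q − 1 edges leaves H_{n,λ} connected, this shows the edge connectivity of H_{n,λ} is exactly q = (n−1)/λ. -/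
namespace BroadcastPaper

/-- The edge connectivity of a graph: the least size of a set of edges of the graph
whose deletion disconnects the graph. -/
noncomputable def edgeConnectivity {V : Type*} (G : SimpleGraph V) : ℕ :=
  sInf {m | ∃ E' : Set (Sym2 V), E' ⊆ G.edgeSet ∧ E'.ncard = m ∧
    ¬ (G.deleteEdges E').Connected}

open SimpleGraph

lemma hub_adj {lam q : ℕ} (x : Fin lam × Fin q) : (hubGraph lam q).Adj none (some x) := by
  rw [hubGraph, SimpleGraph.fromRel_adj]
  exact ⟨by simp, Or.inl trivial⟩

lemma block_adj {lam q : ℕ} {x y : Fin lam × Fin q} (h1 : x.1 = y.1) (h2 : x ≠ y) :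
    (hubGraph lam q).Adj (some x) (some y) := by
  rw [hubGraph, SimpleGraph.fromRel_adj]
  exact ⟨by simpa using h2, Or.inl h1⟩

lemma adj_some_some {lam q : ℕ} {x y : Fin lam × Fin q}
    (h : (hubGraph lam q).Adj (some x) (some y)) : x.1 = y.1 ∧ x ≠ y := by
  rw [hubGraph, SimpleGraph.fromRel_adj] at h
  obtain ⟨hne, h | h⟩ := h
  · exact ⟨h, by simpa using hne⟩
  · exact ⟨h.symm, by simpa using hne⟩

lemma no_reach {V : Type*} {G : SimpleGraph V} {v u : V}
    (h : ∀ w, ¬ G.Adj v w) (hne : v ≠ u) : ¬ G.Reachable v u := by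
  rintro ⟨w⟩
  cases w with
  | nil => exact hne rfl
  | cons ha _ => exact h _ ha

lemma main {lam q : ℕ} (hlam : 1 ≤ lam) (hq : 1 ≤ q) :
    (∃ E' : Set (Sym2 (HubV lam q)),
      E' ⊆ (hubGraph lam q).edgeSet ∧ E'.ncard = q ∧
        ¬ ((hubGraph lam q).deleteEdges E').Connected) ∧
    edgeConnectivity (hubGraph lam q) = q := by
  classical
  set G := hubGraph lam q with hG
  -- lower bound
  have lower : ∀ E' : Set (Sym2 (HubV lam q)), E' ⊆ G.edgeSet → E'.ncard < q →
      (G.deleteEdges E').Connected := by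
    intro E' hsub hcard
    have hreach : ∀ v : HubV lam q, (G.deleteEdges E').Reachable none v := by
      intro v
      match v with
      | none => exact Reachable.refl _
      | some (i, a) =>
        by_contra hnr
        set e : Fin q → Sym2 (HubV lam q) := fun b =>
          if s(none, some (i,b)) ∈ E' then s((none : HubV lam q), some (i,b))
          else s((some (i,b) : HubV lam q), some (i,a)) with he
        have hmem : ∀ b, e b ∈ E' := by
          intro b
          by_cases h1 : s((none : HubV lam q), some (i,b)) ∈ E'
          · simp only [he, if_pos h1]; exact h1
          · simp only [he, h1, if_false]
            by_contra h2
            apply hnr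
            by_cases hba : b = a
            · subst hba
              exact (SimpleGraph.deleteEdges_adj.2 ⟨hub_adj _, h1⟩).reachable
            · have r1 : (G.deleteEdges E').Adj none (some (i,b)) :=
                SimpleGraph.deleteEdges_adj.2 ⟨hub_adj _, h1⟩
              have r2 : (G.deleteEdges E').Adj (some (i,b)) (some (i,a)) :=
                SimpleGraph.deleteEdges_adj.2
                  ⟨block_adj rfl (by simp [hba]), h2⟩
              exact r1.reachable.trans r2.reachable
        have einj : Function.Injective e := by
          intro b b' heq
          simp only [he] at heq
          split_ifs at heq with h1 h2 h2
          · rw [Sym2.eq_iff] at heq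
            rcases heq with ⟨-, h⟩ | ⟨h, -⟩ <;> simp_all
          · exfalso
            have : (none : HubV lam q) ∈ s((some (i,b') : HubV lam q), some (i,a)) := by
              rw [← heq]; exact Sym2.mem_mk_left _ _
            simp [Sym2.mem_iff] at this
          · exfalso
            have : (none : HubV lam q) ∈ s((some (i,b) : HubV lam q), some (i,a)) := by
              rw [heq]; exact Sym2.mem_mk_left _ _
            simp [Sym2.mem_iff] at this
          · rw [Sym2.eq_iff] at heq
            rcases heq with ⟨h, -⟩ | ⟨h, h'⟩ <;> simp_all
        have hrange : Set.range e ⊆ E' := Set.range_subset_iff.2 hmem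
        have hcr : (Set.range e).ncard = q := by
          rw [← Set.image_univ, Set.ncard_image_of_injective _ einj, Set.ncard_univ]
          simp
        have := Set.ncard_le_ncard hrange (Set.toFinite E')
        omega
    rw [SimpleGraph.connected_iff]
    exact ⟨fun u v => (hreach u).symm.trans (hreach v), ⟨none⟩⟩
  -- the disconnecting set
  set i0 : Fin lam := ⟨0, hlam⟩
  set a0 : Fin q := ⟨0, hq⟩
  set v : HubV lam q := some (i0, a0) with hv
  set f : Fin q → Sym2 (HubV lam q) := fun b =>
    if b = a0 then s((none : HubV lam q), v) else s((some (i0,b) : HubV lam q), v) with hf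
  have finj : Function.Injective f := by
    intro b b' heq
    simp only [hf] at heq
    split_ifs at heq with h1 h2 h2
    · exact h1.trans h2.symm
    · exfalso
      have : (none : HubV lam q) ∈ s((some (i0,b') : HubV lam q), v) := by
        rw [← heq]; exact Sym2.mem_mk_left _ _
      simp [hv, Sym2.mem_iff] at this
    · exfalso
      have : (none : HubV lam q) ∈ s((some (i0,b) : HubV lam q), v) := by
        rw [heq]; exact Sym2.mem_mk_left _ _
      simp [hv, Sym2.mem_iff] at this
    · rw [Sym2.eq_iff] at heq
      rcases heq with ⟨h, -⟩ | ⟨h, h'⟩ <;> simp_all [hv]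
  have hsub : Set.range f ⊆ G.edgeSet := by
    rintro _ ⟨b, rfl⟩
    by_cases hb : b = a0
    · simp only [hf, hb, if_pos rfl]
      rw [SimpleGraph.mem_edgeSet]
      exact hub_adj _
    · simp only [hf, hb, if_neg hb]
      rw [SimpleGraph.mem_edgeSet]
      exact block_adj rfl (by simp [hb])
  have hcard : (Set.range f).ncard = q := by
    rw [← Set.image_univ, Set.ncard_image_of_injective _ finj, Set.ncard_univ]
    simp
  have hdisc : ¬ (G.deleteEdges (Set.range f)).Connected := by
    intro hc
    have hiso : ∀ w, ¬ (G.deleteEdges (Set.range f)).Adj v w := by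
      intro w hw
      rw [SimpleGraph.deleteEdges_adj] at hw
      obtain ⟨hadj, hnot⟩ := hw
      apply hnot
      match w with
      | none =>
        refine ⟨a0, ?_⟩
        simp only [hf, if_pos rfl]
        exact (Sym2.eq_swap).symm ▸ rfl
      | some (j, b) =>
        obtain ⟨hj, hne⟩ := adj_some_some hadj
        simp only at hj
        refine ⟨b, ?_⟩
        have hba : b ≠ a0 := by
          intro hba
          apply hne
          simp [hv, hba, ← hj]
        simp only [hf, if_neg hba, hj]
        exact Sym2.eq_swap
    exact no_reach hiso (by simp [hv]) (hc.preconnected v none)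
  refine ⟨⟨Set.range f, hsub, hcard, hdisc⟩, ?_⟩
  unfold edgeConnectivity
  have hmemq : q ∈ {m | ∃ E' : Set (Sym2 (HubV lam q)), E' ⊆ G.edgeSet ∧ E'.ncard = m ∧
      ¬ (G.deleteEdges E').Connected} := ⟨Set.range f, hsub, hcard, hdisc⟩
  refine le_antisymm (Nat.sInf_le hmemq) (le_csInf ⟨q, hmemq⟩ ?_)
  rintro m ⟨E', hs, rfl, hd⟩
  by_contra hlt
  push_neg at hlt
  exact hd (lower E' hs hlt)

/-- for `λ ≥ 1`, `n ≥ 2` with `λ ∣ n − 1` and `q = (n−1)/λ`, there is a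
set of exactly `q` edges of `H_{n,λ}` whose deletion disconnects the graph; together
with the fact that deleting at most `q − 1` edges leaves it connected, the edge
connectivity of `H_{n,λ}` is exactly `q = (n−1)/λ`. -/
theorem hub_edge_connectivity {lam n : ℕ} (hlam : 1 ≤ lam) (hn : 2 ≤ n)
    (hdvd : lam ∣ n - 1) :
    (∃ E' : Set (Sym2 (HubV lam ((n - 1) / lam))),
      E' ⊆ (hubGraph lam ((n - 1) / lam)).edgeSet ∧ E'.ncard = (n - 1) / lam ∧
        ¬ ((hubGraph lam ((n - 1) / lam)).deleteEdges E').Connected) ∧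
    edgeConnectivity (hubGraph lam ((n - 1) / lam)) = (n - 1) / lam := by
  apply main hlam
  rw [Nat.one_le_div_iff (by omega)]
  exact Nat.le_of_dvd (by omega) hdvd

end BroadcastPaper
end

section
/- Let G be a finite simple graph with minimum degree δ such that for every set W of at most 2 vertices, the induced subgraph of G on V(G) ∖ W is connected and nonempty. Then for every vertex s of G and every set A of vertices with s ∉ A and |A| ≤ δ − 2, there exist vertices u and r such that: u is adjacent to s and u ∉ A; r is adjacent to u, r ≠ s, and r ∉ A; and the induced subgraph of G on V(G) ∖ {u, s} is connected. -/
namespace BroadcastPaper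

/-- let `G` be a finite simple graph with minimum degree `δ` such that
removing any set `W` of at most 2 vertices leaves a connected (and nonempty) induced
subgraph. Then for every vertex `s` and every set `A` of vertices with `s ∉ A` and
`|A| ≤ δ − 2`, there are vertices `u`, `r` with: `u` adjacent to `s`, `u ∉ A`; `r`
adjacent to `u`, `r ≠ s`, `r ∉ A`; and the induced subgraph on the complement of
`{u, s}` connected. -/
theorem adversary_moves_exist {V : Type*} [Fintype V] (G : SimpleGraph V)
    [DecidableRel G.Adj]
    (hconn : ∀ W : Set V, W.ncard ≤ 2 → (G.induce (Wᶜ : Set V)).Connected)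
    (s : V) (A : Set V) (hs : s ∉ A) (hA : A.ncard ≤ G.minDegree - 2) :
    ∃ u r : V, G.Adj s u ∧ u ∉ A ∧ G.Adj u r ∧ r ≠ s ∧ r ∉ A ∧
      (G.induce (({u, s} : Set V)ᶜ)).Connected := by
  classical
  -- |V| ≥ 3
  have hcard : 3 ≤ Fintype.card V := by
    by_contra h
    push_neg at h
    have hW : (Set.univ : Set V).ncard ≤ 2 := by
      rw [Set.ncard_univ, Nat.card_eq_fintype_card]; omega
    have hc := hconn Set.univ hW
    rw [Set.compl_univ] at hc
    have hne := hc.nonempty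
    rw [Set.nonempty_coe_sort] at hne
    exact Set.not_nonempty_empty hne
  have hV : Nonempty V := Fintype.card_pos_iff.mp (by omega)
  have ncard_nbr : ∀ v : V, (G.neighborSet v).ncard = G.degree v := by
    intro v
    rw [← Nat.card_coe_set_eq, Nat.card_eq_fintype_card,
      G.card_neighborSet_eq_degree]
  -- minDegree ≥ 2
  have hdelta : 2 ≤ G.minDegree := by
    by_contra h
    push_neg at h
    obtain ⟨v, hv⟩ := G.exists_minimal_degree_vertex
    have hdeg : G.degree v ≤ 1 := by omega
    set W : Set V := G.neighborSet v with hWdef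
    have hW1 : W.ncard ≤ 1 := by
      rw [hWdef, ncard_nbr v]; omega
    have hc := hconn W (by omega)
    have hvW : v ∈ Wᶜ := by simp [hWdef]
    have hcompl : 2 ≤ (Wᶜ : Set V).ncard := by
      have h1 := Set.ncard_add_ncard_compl W
      rw [Nat.card_eq_fintype_card] at h1
      omega
    obtain ⟨w, hwW, hwv⟩ := Set.exists_ne_of_one_lt_ncard (show 1 < (Wᶜ : Set V).ncard by omega) v
    obtain ⟨p⟩ := hc ⟨v, hvW⟩ ⟨w, hwW⟩
    cases p with
    | nil => exact hwv rfl
    | cons hadj q =>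
        rename_i x
        have : G.Adj v x.1 := hadj
        have hx : (x : V) ∈ Wᶜ := x.2
        exact hx this
  have hAcard : A.ncard + 2 ≤ G.minDegree := by omega
  -- choose u
  have hu : ∃ u, G.Adj s u ∧ u ∉ A := by
    by_contra h
    push_neg at h
    have hsub : G.neighborSet s ⊆ A := fun x hx => h x hx
    have hle := Set.ncard_le_ncard hsub A.toFinite
    rw [ncard_nbr s] at hle
    have := G.minDegree_le_degree s
    omega
  obtain ⟨u, hsu, huA⟩ := hu
  have hr : ∃ r, G.Adj u r ∧ r ≠ s ∧ r ∉ A := by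
    by_contra h
    push_neg at h
    have hsub : G.neighborSet u ⊆ insert s A := by
      intro x hx
      by_cases hxs : x = s
      · exact hxs ▸ Set.mem_insert _ _
      · exact Set.mem_insert_of_mem _ (h x hx hxs)
    have hle := Set.ncard_le_ncard hsub ((Set.toFinite A).insert s)
    rw [ncard_nbr u] at hle
    have h2 := Set.ncard_insert_le s A
    have := G.minDegree_le_degree u
    omega
  obtain ⟨r, hur, hrs, hrA⟩ := hr
  refine ⟨u, r, hsu, huA, hur, hrs, hrA, ?_⟩
  apply hconn
  calc ({u, s} : Set V).ncard ≤ ({s} : Set V).ncard + 1 := Set.ncard_insert_le _ _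
    _ ≤ 2 := by rw [Set.ncard_singleton]

end BroadcastPaper
end

section
/- Let G be a finite simple graph on at least 4 vertices with minimum degree δ such that for every set W of at most 2 vertices, the induced subgraph of G on V(G) ∖ W is connected. Then for every integer k with 1 ≤ k ≤ δ − 2, the adversary wins on G with k ignorant agents; consequently Broadcast is not solvable on G with k ignorant agents whenever 1 ≤ k ≤ δ − 2. -/
/-!
The adversary keeps the source agent trapped. If the source stands on `u`, pick a neighbour
`w` of `u` and a neighbour `x ≠ u` of `w`, both unoccupied: this is possible because at most
`k + 1 < δ` vertices are occupied. The adversary then offers the graph that keeps every edge of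
`G` avoiding `u` and `w` and adds only the path `u – w – x`. It is connected since `G - {u, w}`
is, and in it the source can only reach `{u, w}`, while nobody else can enter `{u, w}`, because
the only way in is through the empty vertex `x`. Hence no agent ever meets the source.
-/

namespace BroadcastPaper

section Game

variable {V A : Type*}

/-- An adversary strategy assigns to each finite sequence of position maps
`(p_0, …, p_t)` a simple graph on `V` (intended: a connected spanning subgraph of `G`). -/
abbrev AdvStrategy (V A : Type*) := ∀ t : ℕ, (Fin (t + 1) → A → V) → SimpleGraph V

/-- An agent strategy assigns to each finite sequence of position maps `(p_0, …, p_t)`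
together with a graph `H` a new position map `p_{t+1}`. -/
abbrev AgentStrategy (V A : Type*) := ∀ t : ℕ, (Fin (t + 1) → A → V) → SimpleGraph V → (A → V)

/-- Validity of an adversary strategy: it always produces a connected spanning
subgraph of `G`. -/
def ValidAdv (G : SimpleGraph V) (σ : AdvStrategy V A) : Prop :=
  ∀ t h, σ t h ≤ G ∧ (σ t h).Connected

/-- Validity of an agent strategy: given any history ending in `p_t` and any connected
spanning subgraph `H` of `G`, each agent either stays put or moves along an edge of `H`. -/
def ValidAgent (G : SimpleGraph V) (τ : AgentStrategy V A) : Prop :=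
  ∀ (t : ℕ) (h : Fin (t + 1) → A → V) (H : SimpleGraph V), H ≤ G → H.Connected →
    ∀ a, τ t h H a = h (Fin.last t) a ∨ H.Adj (h (Fin.last t) a) (τ t h H a)

/-- The history `(p_0, …, p_t)` of the play determined by `σ`, `τ` and `p_0`. -/
def hist (σ : AdvStrategy V A) (τ : AgentStrategy V A) (p0 : A → V) :
    (t : ℕ) → Fin (t + 1) → A → V
  | 0 => fun _ => p0
  | t + 1 =>
      Fin.snoc (hist σ τ p0 t) (τ t (hist σ τ p0 t) (σ t (hist σ τ p0 t)))

/-- The position map `p_t` of the play determined by `σ`, `τ` and `p_0`. -/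
def play (σ : AdvStrategy V A) (τ : AgentStrategy V A) (p0 : A → V) (t : ℕ) : A → V :=
  hist σ τ p0 t (Fin.last t)

/-- The evolving sets `S_t` of source agents: `S_0` initially, and at each step any
agent co-located with a source agent becomes a source agent. -/
def sources (p : ℕ → A → V) (S0 : Set A) : ℕ → Set A
  | 0 => S0
  | t + 1 => sources p S0 t ∪ {a | ∃ b ∈ sources p S0 t, p (t + 1) a = p (t + 1) b}

/-- The play `p` with initial source set `S0` solves Broadcast if at some round every
agent is a source agent. -/
def Solves (p : ℕ → A → V) (S0 : Set A) : Prop :=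
  ∃ T, sources p S0 T = Set.univ

/-- Broadcast is solvable on `G` with `k` ignorant agents: with agents `Fin (k+1)`,
agent `0` being the unique source agent, for every injective initial placement there is
a valid agent strategy beating every valid adversary strategy. -/
def BroadcastSolvable (G : SimpleGraph V) (k : ℕ) : Prop :=
  ∀ p0 : Fin (k + 1) → V, Function.Injective p0 →
    ∃ τ : AgentStrategy V (Fin (k + 1)), ValidAgent G τ ∧
      ∀ σ : AdvStrategy V (Fin (k + 1)), ValidAdv G σ →
        Solves (play σ τ p0) {0}

/-- The adversary wins on `G` with `k` ignorant agents: there are an injective initial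
placement and a valid adversary strategy such that against every valid agent strategy,
no agent outside `S_t` is ever co-located with an agent of `S_t`. -/
def AdversaryWins (G : SimpleGraph V) (k : ℕ) : Prop :=
  ∃ p0 : Fin (k + 1) → V, Function.Injective p0 ∧
    ∃ σ : AdvStrategy V (Fin (k + 1)), ValidAdv G σ ∧
      ∀ τ : AgentStrategy V (Fin (k + 1)), ValidAgent G τ →
        ∀ t, ∀ a ∉ sources (play σ τ p0) {0} t, ∀ b ∈ sources (play σ τ p0) {0} t,
          play σ τ p0 t a ≠ play σ τ p0 t b

end Game

open Finset SimpleGraph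

section PendantPath

variable {V : Type*} (G : SimpleGraph V) {u w x a b : V}

def pendantPathGraph (u w x : V) : SimpleGraph V :=
  G ⊓ fromRel fun a b => (a ≠ u ∧ a ≠ w ∧ b ≠ u ∧ b ≠ w) ∨ (a = w ∧ (b = u ∨ b = x))

lemma pendantPathGraph_le : pendantPathGraph G u w x ≤ G := inf_le_left

lemma pendantPathGraph_connected (huw : G.Adj u w) (hwx : G.Adj w x) (hxu : x ≠ u)
    (hc : (G.induce ({u, w} : Set V)ᶜ).Connected) :
    (pendantPathGraph G u w x).Connected := by
  set H := pendantPathGraph G u w x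
  have hwxH : H.Adj w x := ⟨hwx, hwx.ne, .inl (.inr ⟨rfl, .inr rfl⟩)⟩
  have huwH : H.Adj u w := ⟨huw, huw.ne, .inr (.inr ⟨rfl, .inl rfl⟩)⟩
  have hx : x ∈ ({u, w} : Set V)ᶜ := by simp [hxu, hwx.ne']
  have hout : ∀ z ∈ ({u, w} : Set V)ᶜ, z ≠ u ∧ z ≠ w := by simp
  let f : G.induce ({u, w} : Set V)ᶜ →g H :=
    ⟨Subtype.val, fun {a b} hab => ⟨hab, hab.ne ∘ Subtype.ext,
      .inl (.inl ⟨(hout a a.2).1, (hout a a.2).2, (hout b b.2).1, (hout b b.2).2⟩)⟩⟩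
  refine (connected_iff_exists_forall_reachable _).2 ⟨x, fun z => ?_⟩
  by_cases hz : z ∈ ({u, w} : Set V)ᶜ
  · exact (hc.preconnected ⟨x, hx⟩ ⟨z, hz⟩).map f
  · obtain rfl | rfl : z = u ∨ z = w := by simpa [or_iff_not_imp_left] using hz
    · exact (huwH.reachable.trans hwxH.reachable).symm
    · exact hwxH.reachable.symm

lemma mem_pair_of_eq_or_adj_pendantPathGraph (huw : u ≠ w)
    (h : b = u ∨ (pendantPathGraph G u w x).Adj u b) : b ∈ ({u, w} : Set V) := by
  simp only [pendantPathGraph, inf_adj, fromRel_adj] at h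
  grind

lemma notMem_pair_of_pendantPathGraph_move (hu : a ≠ u) (hw : a ≠ w) (hx : a ≠ x)
    (h : b = a ∨ (pendantPathGraph G u w x).Adj a b) : b ∉ ({u, w} : Set V) := by
  simp only [pendantPathGraph, inf_adj, fromRel_adj] at h
  grind

end PendantPath

section Escape

variable {V : Type*} [Fintype V] (G : SimpleGraph V) [DecidableRel G.Adj]

lemma exists_adj_notMem_of_card_lt_degree (S : Finset V) {u : V} (h : #S < G.degree u) :
    ∃ w, G.Adj u w ∧ w ∉ S := by
  by_contra! hS
  have : G.neighborFinset u ⊆ S := fun w hw => hS w ((G.mem_neighborFinset u w).1 hw)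
  exact (card_le_card this).not_gt h

lemma exists_path_notMem_of_card_lt_minDegree {S : Finset V} {u : V}
    (h : #S < G.minDegree) : ∃ w x, G.Adj u w ∧ G.Adj w x ∧ w ∉ S ∧ x ∉ S := by
  obtain ⟨w, huw, hw⟩ :=
    exists_adj_notMem_of_card_lt_degree G S (h.trans_le (G.minDegree_le_degree u))
  obtain ⟨x, hwx, hx⟩ :=
    exists_adj_notMem_of_card_lt_degree G S (h.trans_le (G.minDegree_le_degree w))
  exact ⟨w, x, huw, hwx, hw, hx⟩

lemma lt_card_of_lt_minDegree {n : ℕ} (h : n < G.minDegree) : n < Fintype.card V := by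
  cases isEmpty_or_nonempty V
  · simp [minDegree_of_subsingleton] at h
  · exact h.trans G.minDegree_lt_card

end Escape

section Play

variable {V A : Type*} {G : SimpleGraph V} {σ : AdvStrategy V A} {τ : AgentStrategy V A}
  {p0 : A → V}

lemma play_succ (t : ℕ) :
    play σ τ p0 (t + 1) = τ t (hist σ τ p0 t) (σ t (hist σ τ p0 t)) := by
  simp only [play, hist, Fin.snoc_last]

lemma ValidAgent.play_succ_eq_or_adj (hτ : ValidAgent G τ) (hσ : ValidAdv G σ) (t : ℕ)
    (a : A) : play σ τ p0 (t + 1) a = play σ τ p0 t a ∨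
      (σ t (hist σ τ p0 t)).Adj (play σ τ p0 t a) (play σ τ p0 (t + 1) a) := by
  rw [play_succ]
  exact hτ t _ _ (hσ t _).1 (hσ t _).2 a

lemma sources_eq_self {p : ℕ → A → V} {S0 : Set A}
    (h : ∀ t, ∀ a ∉ S0, ∀ b ∈ S0, p (t + 1) a ≠ p (t + 1) b) (t : ℕ) :
    sources p S0 t = S0 := by
  induction t with
  | zero => rfl
  | succ t ih =>
    rw [sources, ih, Set.union_eq_left]
    rintro a ⟨b, hb, hab⟩
    by_contra ha
    exact h t a ha b hb hab

end Play

section Strategy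

variable {V A : Type*} [Fintype V] [Fintype A] (G : SimpleGraph V) [DecidableRel G.Adj]

theorem exists_validAdv_forall_play_ne_source
    (hconn : ∀ W : Set V, W.ncard ≤ 2 → (G.induce Wᶜ).Connected)
    (hδ : Fintype.card A < G.minDegree) (s : A) :
    ∃ σ : AdvStrategy V A, ValidAdv G σ ∧ ∀ τ, ValidAgent G τ → ∀ p0 : A → V,
      (∀ a ≠ s, p0 a ≠ p0 s) → ∀ t, ∀ a ≠ s, play σ τ p0 t a ≠ play σ τ p0 t s := by
  classical
  choose w x huw hwx hw hx using fun p : A → V =>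
    exists_path_notMem_of_card_lt_minDegree G (S := univ.image p) (u := p s)
      (card_image_le.trans_lt hδ)
  have hp : ∀ (p : A → V) a, p a ∈ univ.image p := fun p a => mem_image_of_mem p (mem_univ a)
  let σ : AdvStrategy V A := fun t h =>
    pendantPathGraph G (h (Fin.last t) s) (w (h (Fin.last t))) (x (h (Fin.last t)))
  have hσ : ValidAdv G σ := fun t h =>
    ⟨pendantPathGraph_le G, pendantPathGraph_connected G (huw _) (hwx _)
      ((hp _ s).ne_of_notMem (hx _)).symm (hconn _ ((Set.ncard_insert_le _ _).trans (by simp)))⟩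
  refine ⟨σ, hσ, fun τ hτ p0 h0 t => ?_⟩
  induction t with
  | zero => exact h0
  | succ t ih =>
    intro a ha
    set p := play σ τ p0 t
    have hsource := mem_pair_of_eq_or_adj_pendantPathGraph G (huw p).ne (hτ.play_succ_eq_or_adj hσ t s)
    have hother := notMem_pair_of_pendantPathGraph_move G (ih a ha) ((hp p a).ne_of_notMem (hw p))
      ((hp p a).ne_of_notMem (hx p)) (hτ.play_succ_eq_or_adj hσ t a)
    exact fun e => hother (e ▸ hsource)

end Strategy

theorem three_connected_adversary_wins_general {V : Type*} [Fintype V] (G : SimpleGraph V)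
    [DecidableRel G.Adj]
    (hconn : ∀ W : Set V, W.ncard ≤ 2 → (G.induce (Wᶜ : Set V)).Connected)
    (k : ℕ) (hk1 : 1 ≤ k) (hk2 : k ≤ G.minDegree - 2) :
    AdversaryWins G k ∧ ¬ BroadcastSolvable G k := by
  have hδ : Fintype.card (Fin (k + 1)) < G.minDegree := by simp only [Fintype.card_fin]; omega
  obtain ⟨σ, hσ, hisolated⟩ := exists_validAdv_forall_play_ne_source G hconn hδ 0
  obtain ⟨p0⟩ := Function.Embedding.nonempty_of_card_le (lt_card_of_lt_minDegree G hδ).le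
  have hp0 : ∀ a ≠ 0, p0 a ≠ p0 0 := fun a ha e => ha (p0.injective e)
  have hsources : ∀ τ, ValidAgent G τ → ∀ t, sources (play σ τ p0) {0} t = {0} :=
    fun τ hτ => sources_eq_self fun t a ha b hb => hb ▸ hisolated τ hτ p0 hp0 (t + 1) a ha
  refine ⟨⟨p0, p0.injective, σ, hσ, fun τ hτ t a ha b hb => ?_⟩, fun hB => ?_⟩
  · rw [hsources τ hτ t] at ha hb
    exact hb ▸ hisolated τ hτ p0 hp0 t a ha
  · obtain ⟨τ, hτ, hsolves⟩ := hB p0 p0.injective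
    obtain ⟨T, hT⟩ := hsolves σ hσ
    have h1 : (⟨1, by omega⟩ : Fin (k + 1)) ∈ sources (play σ τ p0) {0} T := hT ▸ trivial
    rw [hsources τ hτ T] at h1
    exact absurd (congrArg Fin.val h1) one_ne_zero

/-- let `G` be a finite simple graph on at least 4 vertices with minimum
degree `δ` such that removing any set of at most 2 vertices leaves a connected induced
subgraph. Then for every `k` with `1 ≤ k ≤ δ − 2` the adversary wins on `G` with `k`
ignorant agents; consequently Broadcast is not solvable on `G` with `k` ignorant
agents. -/
theorem three_connected_adversary_wins {V : Type*} [Fintype V] (G : SimpleGraph V)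
    [DecidableRel G.Adj] (hV : 4 ≤ Fintype.card V)
    (hconn : ∀ W : Set V, W.ncard ≤ 2 → (G.induce (Wᶜ : Set V)).Connected)
    (k : ℕ) (hk1 : 1 ≤ k) (hk2 : k ≤ G.minDegree - 2) :
    AdversaryWins G k ∧ ¬ BroadcastSolvable G k :=
  three_connected_adversary_wins_general G hconn k hk1 hk2

end BroadcastPaper
end

section
/- Let G be a connected finite simple graph, let A be a set of vertices of G with complement B = V(G) ∖ A, and let C be the set of edges of G with one endpoint in A and one endpoint in B. Assume that |C| = m, that the edges of C are pairwise non-adjacent (no two edges of C share an endpoint), and that for every edge e ∈ C the graph obtained from G by deleting the edges C ∖ {e} is connected. Then for all integers k₁, k₂ ≥ 1 with k₁ + k₂ ≤ m − 1, in the Broadcast game on G with k₂ source agents and k₁ ignorant agents there exist an injective initial placement p_0 placing every ignorant agent on a vertex of A and every source agent on a vertex of B, and an adversary strategy σ, such that for every agent strategy τ, at every round of the resulting play every initially ignorant agent occupies a vertex of A and every initially source agent occupies a vertex of B; in particular no agent outside S_t is ever co-located with an agent in S_t, and the play never solves Broadcast. -/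
namespace BroadcastPaper

/-- The set of edges of `G` with one endpoint in `A` and one endpoint in the
complement of `A`. -/
def crossingEdges {V : Type*} (G : SimpleGraph V) (A : Set V) : Set (Sym2 V) :=
  {e | e ∈ G.edgeSet ∧ ∃ u v : V, e = s(u, v) ∧ u ∈ A ∧ v ∉ A}

/-- let `G` be a connected finite simple graph, `A` a set of vertices
with complement `B`, and `C` the set of edges between `A` and `B`. Assume `|C| = m`,
the edges of `C` are pairwise non-adjacent, and deleting all but any one edge of `C`
leaves `G` connected. For all `k₁, k₂ ≥ 1` with `k₁ + k₂ ≤ m − 1`, in the Broadcast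
game with `k₂` source agents (the agents `a` with `(a : ℕ) < k₂`) and `k₁` ignorant
agents there are an injective initial placement (ignorant agents on `A`, source agents
on `B`) and an adversary strategy such that against every agent strategy, at every
round every initially ignorant agent is on `A` and every initially source agent is on
`B`; in particular no agent outside `S_t` is ever co-located with an agent of `S_t`,
and the play never solves Broadcast. -/
theorem matching_bond_adversary {V : Type*} [Fintype V] (G : SimpleGraph V)
    (hG : G.Connected) (A : Set V) (m : ℕ) (hm : (crossingEdges G A).ncard = m)
    (hmatch : ∀ e₁ ∈ crossingEdges G A, ∀ e₂ ∈ crossingEdges G A, e₁ ≠ e₂ →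
      ∀ v : V, v ∈ e₁ → v ∉ e₂)
    (hdel : ∀ e ∈ crossingEdges G A,
      (G.deleteEdges (crossingEdges G A \ {e})).Connected)
    (k₁ k₂ : ℕ) (hk₁ : 1 ≤ k₁) (hk₂ : 1 ≤ k₂) (hk : k₁ + k₂ ≤ m - 1) :
    ∃ p0 : Fin (k₁ + k₂) → V, Function.Injective p0 ∧
      (∀ a : Fin (k₁ + k₂), (k₂ ≤ (a : ℕ) → p0 a ∈ A) ∧ ((a : ℕ) < k₂ → p0 a ∉ A)) ∧
      ∃ σ : AdvStrategy V (Fin (k₁ + k₂)), ValidAdv G σ ∧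
        ∀ τ : AgentStrategy V (Fin (k₁ + k₂)), ValidAgent G τ →
          (∀ t, ∀ a : Fin (k₁ + k₂),
            (k₂ ≤ (a : ℕ) → play σ τ p0 t a ∈ A) ∧
            ((a : ℕ) < k₂ → play σ τ p0 t a ∉ A)) ∧
          (∀ t, ∀ a ∉ sources (play σ τ p0) {a : Fin (k₁ + k₂) | (a : ℕ) < k₂} t,
            ∀ b ∈ sources (play σ τ p0) {a : Fin (k₁ + k₂) | (a : ℕ) < k₂} t,
              play σ τ p0 t a ≠ play σ τ p0 t b) ∧
          ¬ Solves (play σ τ p0) {a : Fin (k₁ + k₂) | (a : ℕ) < k₂} := by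
  classical
  set n := k₁ + k₂ with hn
  set C := crossingEdges G A with hCdef
  -- choose endpoints of crossing edges
  have h2 : ∀ e : ↥C, ∃ u v : V, (e : Sym2 V) = s(u, v) ∧ u ∈ A ∧ v ∉ A :=
    fun e => e.2.2
  choose uF vF heq huA hvA using h2
  have huMem : ∀ e : ↥C, uF e ∈ (e : Sym2 V) := by
    intro e; rw [heq e]; exact Sym2.mem_mk_left _ _
  have hvMem : ∀ e : ↥C, vF e ∈ (e : Sym2 V) := by
    intro e; rw [heq e]; exact Sym2.mem_mk_right _ _
  -- cardinality facts
  have hCfin : C.Finite := Set.toFinite _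
  haveI : Fintype ↥C := hCfin.fintype
  have hcard : Fintype.card ↥C = m := by
    rw [← Nat.card_eq_fintype_card, Nat.card_coe_set_eq, hm]
  have hnm : n < m := by omega
  -- embedding of agents into crossing edges
  obtain ⟨f⟩ : Nonempty (Fin n ↪ ↥C) := by
    apply Function.Embedding.nonempty_of_card_le
    rw [Fintype.card_fin, hcard]; omega
  -- the initial placement
  set p0 : Fin n → V := fun a => if (a : ℕ) < k₂ then vF (f a) else uF (f a) with hp0
  have hp0A : ∀ a : Fin n, (k₂ ≤ (a : ℕ) → p0 a ∈ A) ∧ ((a : ℕ) < k₂ → p0 a ∉ A) := by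
    intro a
    constructor
    · intro h
      simp only [hp0, if_neg (Nat.not_lt.mpr h)]
      exact huA _
    · intro h
      simp only [hp0, if_pos h]
      exact hvA _
  -- edges of distinct agents are distinct; this gives injectivity
  have hedge_ne : ∀ {a b : Fin n} {x : V}, x ∈ (f a : Sym2 V) → x ∈ (f b : Sym2 V) → a = b := by
    intro a b x hxa hxb
    by_contra hne
    have hfe : (f a : Sym2 V) ≠ (f b : Sym2 V) := by
      intro h
      exact hne (f.injective (Subtype.coe_injective h))
    exact hmatch _ (f a).2 _ (f b).2 hfe x hxa hxb
  have hp0mem : ∀ a : Fin n, p0 a ∈ (f a : Sym2 V) := by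
    intro a
    by_cases h : (a : ℕ) < k₂
    · simp only [hp0, if_pos h]; exact hvMem _
    · simp only [hp0, if_neg h]; exact huMem _
  have hp0inj : Function.Injective p0 := by
    intro a b h
    exact hedge_ne (hp0mem a) (h ▸ hp0mem b)
  -- existence of a free crossing edge at every position
  have hfree : ∀ p : Fin n → V, ∃ e ∈ C, ∀ a, p a ∉ e := by
    intro p
    by_contra hcon
    push_neg at hcon
    have hall : ∀ e : ↥C, ∃ a, p a ∈ (e : Sym2 V) := fun e => hcon e e.2
    choose g hg using hall
    have hginj : Function.Injective g := by
      intro e₁ e₂ h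
      apply Subtype.coe_injective
      by_contra hne
      exact hmatch _ e₁.2 _ e₂.2 hne _ (hg e₁) (h ▸ hg e₂)
    have := Fintype.card_le_of_injective g hginj
    rw [hcard, Fintype.card_fin] at this
    omega
  choose eFree hFreeMem hFreeSpec using hfree
  -- the adversary strategy
  set σ : AdvStrategy V (Fin n) :=
    fun t h => G.deleteEdges (C \ {eFree (h (Fin.last t))}) with hσ
  have hσvalid : ValidAdv G σ := by
    intro t h
    exact ⟨SimpleGraph.deleteEdges_le _, hdel _ (hFreeMem _)⟩
  refine ⟨p0, hp0inj, hp0A, σ, hσvalid, ?_⟩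
  intro τ hτ
  -- key: any crossing edge of the presented graph is the free edge
  have key : ∀ (q : Fin n → V) (x y : V), (G.deleteEdges (C \ {eFree q})).Adj x y →
      x ∈ A → y ∉ A → s(x, y) = eFree q := by
    intro q x y hxy hx hy
    rw [SimpleGraph.deleteEdges_adj] at hxy
    have hmemC : s(x, y) ∈ C := ⟨hxy.1, x, y, rfl, hx, hy⟩
    have := hxy.2
    by_contra hne
    exact this ⟨hmemC, hne⟩
  have hplay0 : play σ τ p0 0 = p0 := rfl
  have hplaysucc : ∀ t, play σ τ p0 (t + 1) =
      τ t (hist σ τ p0 t) (σ t (hist σ τ p0 t)) := by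
    intro t
    simp [play, hist]
  have hhist_last : ∀ t, hist σ τ p0 t (Fin.last t) = play σ τ p0 t := fun _ => rfl
  -- the separation invariant
  have hinv : ∀ t, ∀ a : Fin n,
      (k₂ ≤ (a : ℕ) → play σ τ p0 t a ∈ A) ∧ ((a : ℕ) < k₂ → play σ τ p0 t a ∉ A) := by
    intro t
    induction t with
    | zero => intro a; rw [hplay0]; exact hp0A a
    | succ t ih =>
      intro a
      set e := eFree (play σ τ p0 t) with he
      have hHeq : σ t (hist σ τ p0 t) = G.deleteEdges (C \ {e}) := rfl
      have hstep := hτ t (hist σ τ p0 t) (σ t (hist σ τ p0 t))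
        (hσvalid t _).1 (hσvalid t _).2 a
      rw [hhist_last, ← hplaysucc] at hstep
      have hsame : play σ τ p0 (t + 1) a ∈ A ↔ play σ τ p0 t a ∈ A := by
        rcases hstep with hstay | hadj
        · rw [hstay]
        · rw [hHeq] at hadj
          constructor
          · intro h1
            by_contra h0
            have := key (play σ τ p0 t) _ _ hadj.symm h1 h0
            exact hFreeSpec (play σ τ p0 t) a
              (this ▸ Sym2.mem_mk_right _ _)
          · intro h0
            by_contra h1
            have := key (play σ τ p0 t) _ _ hadj h0 h1
            exact hFreeSpec (play σ τ p0 t) a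
              (this ▸ Sym2.mem_mk_left _ _)
      constructor
      · intro h; exact hsame.mpr ((ih a).1 h)
      · intro h hmem; exact (ih a).2 h (hsame.mp hmem)
  refine ⟨hinv, ?_, ?_⟩
  · -- sources stay constant
    have hsrc : ∀ t, sources (play σ τ p0) {a : Fin n | (a : ℕ) < k₂} t
        = {a : Fin n | (a : ℕ) < k₂} := by
      intro t
      induction t with
      | zero => rfl
      | succ t ih =>
        show sources _ _ t ∪ _ = _
        rw [ih]
        apply Set.union_eq_left.mpr
        rintro a ⟨b, hb, hab⟩
        simp only [Set.mem_setOf_eq] at hb ⊢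
        by_contra ha
        exact (hinv (t + 1) b).2 hb (hab ▸ (hinv (t + 1) a).1 (Nat.not_lt.mp ha))
    intro t a ha b hb hab
    rw [hsrc] at ha hb
    exact (hinv t b).2 hb (hab ▸ (hinv t a).1 (Nat.not_lt.mp ha))
  · -- never solves
    rintro ⟨T, hT⟩
    have hsrc : ∀ t, sources (play σ τ p0) {a : Fin n | (a : ℕ) < k₂} t
        = {a : Fin n | (a : ℕ) < k₂} := by
      intro t
      induction t with
      | zero => rfl
      | succ t ih =>
        show sources _ _ t ∪ _ = _
        rw [ih]
        apply Set.union_eq_left.mpr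
        rintro a ⟨b, hb, hab⟩
        simp only [Set.mem_setOf_eq] at hb ⊢
        by_contra ha
        exact (hinv (t + 1) b).2 hb (hab ▸ (hinv (t + 1) a).1 (Nat.not_lt.mp ha))
    rw [hsrc] at hT
    have : (⟨k₂, by omega⟩ : Fin n) ∈ {a : Fin n | (a : ℕ) < k₂} :=
      hT ▸ Set.mem_univ _
    simp at this

end BroadcastPaper
end

section
/- Let G be a connected finite simple graph having a matching bond with m ≥ 3 edges; that is, there is a set A of vertices with complement B = V(G) ∖ A such that the set C of edges between A and B has |C| = m, the edges of C are pairwise non-adjacent, and for every e ∈ C the graph obtained from G by deleting the edges C ∖ {e} is connected. Then for every integer k with 1 ≤ k ≤ m − 2, the adversary wins on G with k ignorant agents; hence Broadcast is not solvable on G with k ignorant agents whenever 1 ≤ k ≤ m − 2. -/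
namespace BroadcastPaper

/-- let `G` be a connected finite simple graph having a matching bond
with `m ≥ 3` edges: a set `A` of vertices such that the set `C` of edges between `A`
and its complement has `|C| = m`, the edges of `C` are pairwise non-adjacent, and
deleting all but any one edge of `C` leaves `G` connected. Then for every `k` with
`1 ≤ k ≤ m − 2`, the adversary wins on `G` with `k` ignorant agents; hence Broadcast
is not solvable on `G` with `k` ignorant agents. -/
theorem matching_bond_adversary_wins {V : Type*} [Fintype V] (G : SimpleGraph V)
    (hG : G.Connected) (A : Set V) (m : ℕ) (hm3 : 3 ≤ m)
    (hm : (crossingEdges G A).ncard = m)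
    (hmatch : ∀ e₁ ∈ crossingEdges G A, ∀ e₂ ∈ crossingEdges G A, e₁ ≠ e₂ →
      ∀ v : V, v ∈ e₁ → v ∉ e₂)
    (hdel : ∀ e ∈ crossingEdges G A,
      (G.deleteEdges (crossingEdges G A \ {e})).Connected)
    (k : ℕ) (hk1 : 1 ≤ k) (hk2 : k ≤ m - 2) :
    AdversaryWins G k ∧ ¬ BroadcastSolvable G k := by
  classical
  have hV : Nonempty V := hG.nonempty
  -- endpoints of crossing edges
  have hends : ∀ e : Sym2 V, ∃ u v : V,
      e ∈ crossingEdges G A → e = s(u, v) ∧ u ∈ A ∧ v ∉ A := by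
    intro e
    by_cases he : e ∈ crossingEdges G A
    · obtain ⟨u, v, h⟩ := he.2
      exact ⟨u, v, fun _ => h⟩
    · exact ⟨Classical.arbitrary V, Classical.arbitrary V, fun h => absurd h he⟩
  choose aEnd bEnd hend using hends
  have haA : ∀ e ∈ crossingEdges G A, aEnd e ∈ A := fun e he => (hend e he).2.1
  have hbA : ∀ e ∈ crossingEdges G A, bEnd e ∉ A := fun e he => (hend e he).2.2
  have haMem : ∀ e ∈ crossingEdges G A, aEnd e ∈ e := by
    intro e he
    have h := Sym2.mem_mk_left (aEnd e) (bEnd e)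
    rwa [← (hend e he).1] at h
  have hbMem : ∀ e ∈ crossingEdges G A, bEnd e ∈ e := by
    intro e he
    have h := Sym2.mem_mk_right (aEnd e) (bEnd e)
    rwa [← (hend e he).1] at h
  -- choose a crossing edge avoiding all agent positions
  have hpick_ex : ∀ p : Fin (k + 1) → V,
      ∃ e, e ∈ crossingEdges G A ∧ ∀ x ∈ e, ∀ a, p a ≠ x := by
    intro p
    by_contra hcon
    push_neg at hcon
    have hg : ∀ e : crossingEdges G A, ∃ a : Fin (k + 1), p a ∈ (e : Sym2 V) := by
      rintro ⟨e, he⟩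
      obtain ⟨x, hx, a, ha⟩ := hcon e he
      exact ⟨a, ha ▸ hx⟩
    choose g hgmem using hg
    have hginj : Function.Injective g := by
      intro e₁ e₂ hge
      by_contra hne
      have h1 := hgmem e₁
      have h2 := hgmem e₂
      rw [hge] at h1
      exact hmatch _ e₁.2 _ e₂.2 (fun h => hne (Subtype.ext h)) _ h1 h2
    have hle := Nat.card_le_card_of_injective g hginj
    rw [Nat.card_coe_set_eq, hm, Nat.card_eq_fintype_card, Fintype.card_fin] at hle
    omega
  choose pick hpick using hpick_ex
  -- the adversary strategy
  let σ : AdvStrategy V (Fin (k + 1)) :=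
    fun t h => G.deleteEdges (crossingEdges G A \ {pick (h (Fin.last t))})
  have hσ : ValidAdv G σ := by
    intro t h
    exact ⟨SimpleGraph.deleteEdges_le _, hdel _ (hpick _).1⟩
  -- the initial placement
  have hCfin : (crossingEdges G A).Finite := Set.toFinite _
  haveI : Fintype ↥(crossingEdges G A) := hCfin.fintype
  have hcard : Fintype.card ↥(crossingEdges G A) = m := by
    rw [← Nat.card_eq_fintype_card, Nat.card_coe_set_eq, hm]
  obtain ⟨f⟩ : Nonempty (Fin (k + 1) ↪ ↥(crossingEdges G A)) := by
    apply Function.Embedding.nonempty_of_card_le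
    rw [Fintype.card_fin, hcard]; omega
  let p0 : Fin (k + 1) → V := fun a => if a = 0 then aEnd (f 0) else bEnd (f a)
  have hp0v : ∀ a : Fin (k + 1), p0 a = if a = 0 then aEnd (f 0) else bEnd (f a) :=
    fun _ => rfl
  have hp0A : p0 0 ∈ A := by
    rw [hp0v, if_pos rfl]; exact haA _ (f 0).2
  have hp0B : ∀ a : Fin (k + 1), a ≠ 0 → p0 a ∉ A := by
    intro a ha
    rw [hp0v, if_neg ha]; exact hbA _ (f a).2
  have hp0inj : Function.Injective p0 := by
    intro a b hab
    by_cases ha : a = 0 <;> by_cases hb : b = 0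
    · rw [ha, hb]
    · exfalso
      rw [hp0v, hp0v, if_pos ha, if_neg hb] at hab
      exact hbA _ (f b).2 (hab ▸ haA _ (f 0).2)
    · exfalso
      rw [hp0v, hp0v, if_neg ha, if_pos hb] at hab
      exact hbA _ (f a).2 (hab.symm ▸ haA _ (f 0).2)
    · rw [hp0v, hp0v, if_neg ha, if_neg hb] at hab
      by_contra hne
      have hfne : (f a : Sym2 V) ≠ (f b : Sym2 V) :=
        fun h => hne (f.injective (Subtype.ext h))
      have hmem2 : bEnd (f a : Sym2 V) ∈ (f b : Sym2 V) := by
        rw [hab]; exact hbMem _ (f b).2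
      exact hmatch _ (f a).2 _ (f b).2 hfne _ (hbMem _ (f a).2) hmem2
  -- the key invariant: agent 0 stays in A, all other agents stay outside A
  have main : ∀ τ : AgentStrategy V (Fin (k + 1)), ValidAgent G τ → ∀ t,
      play σ τ p0 t 0 ∈ A ∧ ∀ a : Fin (k + 1), a ≠ 0 → play σ τ p0 t a ∉ A := by
    intro τ hτ t
    induction t with
    | zero => exact ⟨hp0A, hp0B⟩
    | succ t ih =>
      obtain ⟨heC, heAvoid⟩ := hpick (play σ τ p0 t)
      have hHle : σ t (hist σ τ p0 t) ≤ G := (hσ t (hist σ τ p0 t)).1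
      have hHconn := (hσ t (hist σ τ p0 t)).2
      have hmove : ∀ a, τ t (hist σ τ p0 t) (σ t (hist σ τ p0 t)) a = play σ τ p0 t a ∨
          (σ t (hist σ τ p0 t)).Adj (play σ τ p0 t a)
            (τ t (hist σ τ p0 t) (σ t (hist σ τ p0 t)) a) :=
        hτ t (hist σ τ p0 t) _ hHle hHconn
      have hplay1 : play σ τ p0 (t + 1) = τ t (hist σ τ p0 t) (σ t (hist σ τ p0 t)) := by
        simp only [play, hist, Fin.snoc_last]
      have hHeq : σ t (hist σ τ p0 t) =
          G.deleteEdges (crossingEdges G A \ {pick (play σ τ p0 t)}) := rfl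
      have hkey : ∀ x y : V, (σ t (hist σ τ p0 t)).Adj x y →
          x ∉ pick (play σ τ p0 t) → (x ∈ A ↔ y ∈ A) := by
        intro x y hxy hxe
        rw [hHeq, SimpleGraph.deleteEdges_adj] at hxy
        obtain ⟨hadj, hnot⟩ := hxy
        constructor
        · intro hx
          by_contra hy
          have hmemC : s(x, y) ∈ crossingEdges G A :=
            ⟨G.mem_edgeSet.2 hadj, x, y, rfl, hx, hy⟩
          have heq : s(x, y) = pick (play σ τ p0 t) := by
            by_contra hne
            exact hnot ⟨hmemC, hne⟩
          exact hxe (heq ▸ Sym2.mem_mk_left x y)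
        · intro hy
          by_contra hx
          have hmemC : s(x, y) ∈ crossingEdges G A := by
            rw [Sym2.eq_swap]
            exact ⟨G.mem_edgeSet.2 hadj.symm, y, x, rfl, hy, hx⟩
          have heq : s(x, y) = pick (play σ τ p0 t) := by
            by_contra hne
            exact hnot ⟨hmemC, hne⟩
          exact hxe (heq ▸ Sym2.mem_mk_left x y)
      have hside : ∀ a : Fin (k + 1),
          (play σ τ p0 (t + 1) a ∈ A ↔ play σ τ p0 t a ∈ A) := by
        intro a
        have hq' : play σ τ p0 (t + 1) a = play σ τ p0 t a ∨
            (σ t (hist σ τ p0 t)).Adj (play σ τ p0 t a) (play σ τ p0 (t + 1) a) := by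
          rw [hplay1]; exact hmove a
        rcases hq' with h | h
        · rw [h]
        · exact (hkey _ _ h (fun hmem => heAvoid _ hmem a rfl)).symm
      exact ⟨(hside 0).2 ih.1, fun a ha hA => ih.2 a ha ((hside a).1 hA)⟩
  -- the sources never grow
  have hsrc : ∀ τ : AgentStrategy V (Fin (k + 1)), ValidAgent G τ → ∀ t,
      sources (play σ τ p0) {0} t = {0} := by
    intro τ hτ t
    induction t with
    | zero => rfl
    | succ t ih =>
      have hinv := main τ hτ (t + 1)
      simp only [sources, ih]
      apply Set.Subset.antisymm
      · intro a ha
        rcases ha with ha | ⟨b, hb, hab⟩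
        · exact ha
        · have hb0 : b = 0 := hb
          by_contra ha0
          have ha0' : a ≠ 0 := ha0
          have : play σ τ p0 (t + 1) a ∈ A := by
            rw [hab, hb0]; exact hinv.1
          exact hinv.2 a ha0' this
      · exact Set.subset_union_left
  have hwin : AdversaryWins G k := by
    refine ⟨p0, hp0inj, σ, hσ, ?_⟩
    intro τ hτ t a ha b hb heq
    rw [hsrc τ hτ t] at ha hb
    have hb0 : b = 0 := hb
    have ha0 : a ≠ 0 := fun h => ha (h ▸ rfl)
    refine (main τ hτ t).2 a ha0 ?_
    rw [heq, hb0]; exact (main τ hτ t).1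
  refine ⟨hwin, ?_⟩
  intro hBS
  obtain ⟨τ, hτ, hbeat⟩ := hBS p0 hp0inj
  obtain ⟨T, hT⟩ := hbeat σ hσ
  have h1 : (⟨1, by omega⟩ : Fin (k + 1)) ∈ sources (play σ τ p0) {0} T := by
    rw [hT]; exact Set.mem_univ _
  rw [hsrc τ hτ T] at h1
  have h10 : (⟨1, by omega⟩ : Fin (k + 1)) = 0 := h1
  simp [Fin.ext_iff] at h10

end BroadcastPaper
end
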